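/- Let 𝒥 = (J_1,…,J_m) be a cover of I = {1,…,n} satisfying conditions (B1) and (B2), and for each k let W^{J_k} have the Gibbs block structure for J_k; assume condition (A1) with constant λ ∈ [0,1). Let 𝒲_odd be the product of the matrices W^{J_k} over odd k taken in decreasing order of k, 𝒲_even the product over even k in decreasing order of k, and 𝒲 = 𝒲_even·𝒲_odd (the Wasserstein matrix of one complete sweep of the parallel (PAR) blocked Gibbs sampler). Then ‖𝒲‖_∞ ≤ 2 and, for every integer k ≥ 1, ‖𝒲^k‖_∞ ≤ ‖𝒲‖_∞ · λ^{2(k−1)}. -/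

import Mathlib

open Finset

/-- The boundary `∂J` of a block `J ⊆ I`: indices outside `J` adjacent to `J`. -/
def bdry {n : ℕ} (J : Finset (Fin n)) : Finset (Fin n) :=
  Finset.univ.filter fun t => t ∉ J ∧ ∃ s ∈ J, ((s : ℕ) = (t : ℕ) + 1 ∨ (t : ℕ) = (s : ℕ) + 1)

/-- `W` has the Gibbs block structure for block `J`: entries in `[0,1]`, rows outside `J`
are identity rows, and rows in `J` vanish outside `∂J`. -/
def GibbsBlock {n : ℕ} (J : Finset (Fin n)) (W : Matrix (Fin n) (Fin n) ℝ) : Prop :=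
  (∀ i j, 0 ≤ W i j ∧ W i j ≤ 1) ∧
  (∀ i, i ∉ J → ∀ j, W i j = if i = j then 1 else 0) ∧
  (∀ i ∈ J, ∀ j, j ∉ bdry J → W i j = 0)

/-- Maximum absolute row sum norm `‖A‖_∞`. -/
noncomputable def rowNorm {n : ℕ} (A : Matrix (Fin n) (Fin n) ℝ) : ℝ :=
  ⨆ i, ∑ j, |A i j|

/-- The list `[m, m-1, …, 1]`. -/
def descList (m : ℕ) : List ℕ := (List.range m).map fun i => m - i

/-- A block is a (nonempty) integer interval. -/
def IsIntervalBlock {n : ℕ} (J : Finset (Fin n)) : Prop :=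
  J.Nonempty ∧ ∀ a ∈ J, ∀ b ∈ J, ∀ c : Fin n, a ≤ c → c ≤ b → c ∈ J

/-- Smallest index of a block (as a natural number). -/
noncomputable def blockMin {n : ℕ} (J : Finset (Fin n)) : ℕ :=
  sInf {t : ℕ | ∃ s ∈ J, (s : ℕ) = t}

/-- Largest index of a block (as a natural number). -/
def blockMax {n : ℕ} (J : Finset (Fin n)) : ℕ := J.sup fun t => (t : ℕ)

/-- Condition (B1): blocks are intervals, ordered by their min and max elements. -/
def CondB1 {n : ℕ} (m : ℕ) (J : ℕ → Finset (Fin n)) : Prop :=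
  (∀ k ∈ Finset.Icc 1 m, IsIntervalBlock (J k)) ∧
  ∀ j k, 1 ≤ j → j < k → k ≤ m →
    blockMin (J j) < blockMin (J k) ∧ blockMax (J j) < blockMax (J k)

/-- Condition (B2): non-consecutive blocks are separated. -/
def CondB2 {n : ℕ} (m : ℕ) (J : ℕ → Finset (Fin n)) : Prop :=
  ∀ j k, 1 ≤ j → j + 2 ≤ k → k ≤ m → blockMax (J j) + 1 < blockMin (J k)

/-- Matrix entry addressed with integer indices; out-of-range indices give `0`. -/
noncomputable def entryZ {n : ℕ} (A : Matrix (Fin n) (Fin n) ℝ) (i j : ℤ) : ℝ :=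
  if hi : 0 ≤ i ∧ i < (n : ℤ) then
    if hj : 0 ≤ j ∧ j < (n : ℤ) then A ⟨i.toNat, by omega⟩ ⟨j.toNat, by omega⟩ else 0
  else 0

/-!
Within one parity class the blocks are pairwise separated by (B2), so the product of their
Gibbs matrices acts on a row `i ∈ J_k` as `W^{J_k}` and on every other row as the identity.
In one sweep `𝒲 = 𝒲_even 𝒲_odd` a row of an even block `J_k` is therefore carried to `∂J_k`,
which lies in `∂` and in odd blocks, and then to the boundaries of those odd blocks, which lie
in `∂` and in even blocks. So every row of `𝒲` has sum at most `2` (an interval has at most two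
boundary points), the columns it uses lie in the set `S` of points of `∂` covered by an even
block, and the rows indexed by `S` have sum at most `λ²`, one factor `λ` from each half-sweep
by (A1). As `S` is invariant, `‖𝒲^k‖_∞ ≤ ‖𝒲‖_∞ λ^{2(k-1)}`.
-/

section RowSums

variable {ι : Type*} [Fintype ι]

lemma sum_mul_apply_eq (A B : Matrix ι ι ℝ) (i : ι) :
    ∑ j, (A * B) i j = ∑ u, A i u * ∑ j, B u j := by
  simp only [Matrix.mul_apply, Finset.mul_sum]
  exact Finset.sum_comm

lemma sum_mul_le_sum_mul_of_ne_zero {a f : ι → ℝ} {c : ℝ} (ha : ∀ u, 0 ≤ a u)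
    (hf : ∀ u, a u ≠ 0 → f u ≤ c) : ∑ u, a u * f u ≤ (∑ u, a u) * c := by
  rw [Finset.sum_mul]
  refine Finset.sum_le_sum fun u _ => ?_
  by_cases hu : a u = 0
  · simp [hu]
  · exact mul_le_mul_of_nonneg_left (hf u hu) (ha u)

lemma mul_apply_nonneg {A B : Matrix ι ι ℝ} (hA : ∀ i j, 0 ≤ A i j) (hB : ∀ i j, 0 ≤ B i j)
    (i j : ι) : 0 ≤ (A * B) i j :=
  Finset.sum_nonneg fun u _ => mul_nonneg (hA i u) (hB u j)

lemma pow_apply_nonneg [DecidableEq ι] {M : Matrix ι ι ℝ} (hM : ∀ i j, 0 ≤ M i j) (p : ℕ) :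
    ∀ i j, 0 ≤ (M ^ p) i j := by
  induction p with
  | zero => intro i j; rw [pow_zero, Matrix.one_apply]; split_ifs <;> norm_num
  | succ p ih => rw [pow_succ]; exact mul_apply_nonneg ih hM

lemma list_prod_apply_nonneg [DecidableEq ι] {L : List (Matrix ι ι ℝ)}
    (hL : ∀ A ∈ L, ∀ i j, 0 ≤ A i j) : ∀ i j, 0 ≤ L.prod i j := by
  induction L with
  | nil => intro i j; rw [List.prod_nil, Matrix.one_apply]; split_ifs <;> norm_num
  | cons A L ih =>
    rw [List.prod_cons]
    exact mul_apply_nonneg (hL A List.mem_cons_self)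
      (ih fun B hB => hL B (List.mem_cons_of_mem A hB))

lemma sum_pow_succ_apply_le [DecidableEq ι] {M : Matrix ι ι ℝ} {S : Set ι} {c : ℝ}
    (hM : ∀ i j, 0 ≤ M i j) (hS : ∀ i j, M i j ≠ 0 → j ∈ S) (hc0 : 0 ≤ c)
    (hc : ∀ s ∈ S, ∑ j, M s j ≤ c) (p : ℕ) (i : ι) :
    ∑ j, (M ^ (p + 1)) i j ≤ (∑ j, M i j) * c ^ p := by
  induction p generalizing i with
  | zero => simp
  | succ p ih =>
    rw [pow_succ' M (p + 1), sum_mul_apply_eq]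
    refine sum_mul_le_sum_mul_of_ne_zero (hM i) fun u hu => ?_
    calc ∑ j, (M ^ (p + 1)) u j ≤ (∑ j, M u j) * c ^ p := ih u
      _ ≤ c * c ^ p := by gcongr; exact hc u (hS i u hu)
      _ = c ^ (p + 1) := (pow_succ' c p).symm

end RowSums

section RowNorm

variable {n : ℕ}

lemma rowNorm_nonneg (A : Matrix (Fin n) (Fin n) ℝ) : 0 ≤ rowNorm A :=
  Real.iSup_nonneg fun _ => Finset.sum_nonneg fun _ _ => abs_nonneg _

lemma sum_apply_le_rowNorm {A : Matrix (Fin n) (Fin n) ℝ} (hA : ∀ i j, 0 ≤ A i j) (i : Fin n) :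
    ∑ j, A i j ≤ rowNorm A := by
  calc ∑ j, A i j = ∑ j, |A i j| := Finset.sum_congr rfl fun j _ => (abs_of_nonneg (hA i j)).symm
    _ ≤ rowNorm A := le_ciSup (f := fun i => ∑ j, |A i j|) (Set.finite_range _).bddAbove i

lemma rowNorm_le_of_nonneg {A : Matrix (Fin n) (Fin n) ℝ} (hA : ∀ i j, 0 ≤ A i j) {c : ℝ}
    (hc : 0 ≤ c) (h : ∀ i, ∑ j, A i j ≤ c) : rowNorm A ≤ c := by
  refine Real.iSup_le (fun i => ?_) hc
  simpa only [abs_of_nonneg (hA i _)] using h i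

lemma rowNorm_pow_succ_le {M : Matrix (Fin n) (Fin n) ℝ} {S : Set (Fin n)} {c : ℝ}
    (hM : ∀ i j, 0 ≤ M i j) (hS : ∀ i j, M i j ≠ 0 → j ∈ S) (hc0 : 0 ≤ c)
    (hc : ∀ s ∈ S, ∑ j, M s j ≤ c) (p : ℕ) :
    rowNorm (M ^ (p + 1)) ≤ rowNorm M * c ^ p := by
  refine rowNorm_le_of_nonneg (pow_apply_nonneg hM _)
    (mul_nonneg (rowNorm_nonneg M) (pow_nonneg hc0 p)) fun i => ?_
  calc ∑ j, (M ^ (p + 1)) i j ≤ (∑ j, M i j) * c ^ p := sum_pow_succ_apply_le hM hS hc0 hc p i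
    _ ≤ rowNorm M * c ^ p := by gcongr; exact sum_apply_le_rowNorm hM i

end RowNorm

section IntervalBlocks

variable {n : ℕ} {J : Finset (Fin n)} {t : Fin n}

lemma blockMin_le (ht : t ∈ J) : blockMin J ≤ t := Nat.sInf_le ⟨t, ht, rfl⟩

lemma le_blockMax (ht : t ∈ J) : (t : ℕ) ≤ blockMax J := Finset.le_sup ht

lemma exists_val_eq_blockMin (h : J.Nonempty) : ∃ s ∈ J, (s : ℕ) = blockMin J :=
  Nat.sInf_mem (s := {t : ℕ | ∃ s ∈ J, (s : ℕ) = t}) (h.elim fun a ha => ⟨a, a, ha, rfl⟩)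

lemma exists_val_eq_blockMax (h : J.Nonempty) : ∃ s ∈ J, (s : ℕ) = blockMax J := by
  obtain ⟨s, hs, hmax⟩ := Finset.exists_mem_eq_sup J h (fun t => (t : ℕ))
  exact ⟨s, hs, hmax.symm⟩

lemma blockMin_le_blockMax (h : J.Nonempty) : blockMin J ≤ blockMax J := by
  obtain ⟨s, hs, hmin⟩ := exists_val_eq_blockMin h
  exact hmin ▸ le_blockMax hs

lemma IsIntervalBlock.mem_of_le_of_le (hJ : IsIntervalBlock J) (hmin : blockMin J ≤ t)
    (hmax : (t : ℕ) ≤ blockMax J) : t ∈ J := by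
  obtain ⟨a, ha, ha'⟩ := exists_val_eq_blockMin hJ.1
  obtain ⟨b, hb, hb'⟩ := exists_val_eq_blockMax hJ.1
  exact hJ.2 a ha b hb t (Fin.le_def.mpr (by omega)) (Fin.le_def.mpr (by omega))

lemma mem_bdry : t ∈ bdry J ↔ t ∉ J ∧ ∃ s ∈ J, ((s : ℕ) = t + 1 ∨ (t : ℕ) = s + 1) := by
  simp [bdry]

lemma IsIntervalBlock.val_of_mem_bdry (hJ : IsIntervalBlock J) (ht : t ∈ bdry J) :
    (t : ℕ) + 1 = blockMin J ∨ (t : ℕ) = blockMax J + 1 := by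
  obtain ⟨htJ, s, hs, hst⟩ := mem_bdry.mp ht
  have := blockMin_le hs
  have := le_blockMax hs
  by_contra! hne
  exact htJ (hJ.mem_of_le_of_le (by omega) (by omega))

lemma IsIntervalBlock.card_bdry_le_two (hJ : IsIntervalBlock J) : (bdry J).card ≤ 2 := by
  calc (bdry J).card ≤ ({blockMin J - 1, blockMax J + 1} : Finset ℕ).card := by
        refine Finset.card_le_card_of_injOn Fin.val (fun t ht => ?_) Fin.val_injective.injOn
        have := hJ.val_of_mem_bdry ht
        simp only [Finset.mem_coe, Finset.mem_insert, Finset.mem_singleton]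
        omega
    _ ≤ 2 := Finset.card_le_two

end IntervalBlocks

section IdentityRows

variable {ι R : Type*} [Fintype ι] [DecidableEq ι] [NonAssocSemiring R] {A B : Matrix ι ι R}
  {i : ι}

lemma mul_apply_of_row_eq_one (h : ∀ t, A i t = (1 : Matrix ι ι R) i t) (j : ι) :
    (A * B) i j = B i j :=
  calc (A * B) i j = ((1 : Matrix ι ι R) * B) i j := by simp only [Matrix.mul_apply, h]
    _ = B i j := by rw [Matrix.one_mul]

lemma mul_apply_of_row_eq_one_of_ne_zero (h : ∀ t, A i t ≠ 0 → ∀ j, B t j = (1 : Matrix ι ι R) t j)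
    (j : ι) : (A * B) i j = A i j := by
  rw [← Matrix.mul_one A, Matrix.mul_apply, Matrix.mul_apply, Matrix.mul_one]
  refine Finset.sum_congr rfl fun t _ => ?_
  by_cases ht : A i t = 0
  · simp [ht]
  · rw [h t ht j]

end IdentityRows

section GibbsBlock

variable {n : ℕ} {J : Finset (Fin n)} {W : Matrix (Fin n) (Fin n) ℝ} {i j : Fin n}

lemma GibbsBlock.nonneg (h : GibbsBlock J W) (i j : Fin n) : 0 ≤ W i j := (h.1 i j).1

lemma GibbsBlock.apply_of_notMem (h : GibbsBlock J W) (hi : i ∉ J) (j : Fin n) :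
    W i j = (1 : Matrix (Fin n) (Fin n) ℝ) i j := by
  rw [h.2.1 i hi j, Matrix.one_apply]

lemma GibbsBlock.mem_bdry_of_apply_ne_zero (h : GibbsBlock J W) (hi : i ∈ J) (hij : W i j ≠ 0) :
    j ∈ bdry J :=
  by_contra fun hj => hij (h.2.2 i hi j hj)

lemma GibbsBlock.sum_apply_eq_sum_bdry (h : GibbsBlock J W) (hi : i ∈ J) :
    ∑ j, W i j = ∑ j ∈ bdry J, W i j :=
  (Finset.sum_subset (Finset.subset_univ _) fun j _ hj => h.2.2 i hi j hj).symm

lemma GibbsBlock.sum_bdry_le_two (h : GibbsBlock J W) (hJ : IsIntervalBlock J) (i : Fin n) :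
    ∑ j ∈ bdry J, W i j ≤ 2 :=
  calc ∑ j ∈ bdry J, W i j ≤ ∑ j ∈ bdry J, (1 : ℝ) := Finset.sum_le_sum fun j _ => (h.1 i j).2
    _ = (bdry J).card := by simp
    _ ≤ 2 := by exact_mod_cast hJ.card_bdry_le_two

end GibbsBlock

section ListProd

variable {n : ℕ} {J : ℕ → Finset (Fin n)} {W : ℕ → Matrix (Fin n) (Fin n) ℝ} {L : List ℕ}

lemma list_prod_apply_of_forall_notMem (hG : ∀ k ∈ L, GibbsBlock (J k) (W k)) {i : Fin n}
    (hi : ∀ k ∈ L, i ∉ J k) (j : Fin n) :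
    (L.map W).prod i j = (1 : Matrix (Fin n) (Fin n) ℝ) i j := by
  induction L with
  | nil => rfl
  | cons a L ih =>
    rw [List.map_cons, List.prod_cons,
      mul_apply_of_row_eq_one ((hG a List.mem_cons_self).apply_of_notMem (hi a List.mem_cons_self))]
    exact ih (fun k hk => hG k (List.mem_cons_of_mem a hk))
      fun k hk => hi k (List.mem_cons_of_mem a hk)

lemma list_prod_apply_of_mem (hG : ∀ k ∈ L, GibbsBlock (J k) (W k))
    (hsep : ∀ k ∈ L, ∀ l ∈ L, k ≠ l → ∀ t, t ∈ J k ∨ t ∈ bdry (J k) → t ∉ J l)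
    {k : ℕ} (hk : k ∈ L) {i : Fin n} (hi : i ∈ J k) (j : Fin n) : (L.map W).prod i j = W k i j := by
  induction L with
  | nil => cases hk
  | cons a L ih =>
    have hG' : ∀ l ∈ L, GibbsBlock (J l) (W l) := fun l hl => hG l (List.mem_cons_of_mem a hl)
    rw [List.map_cons, List.prod_cons]
    by_cases hia : i ∈ J a
    · obtain rfl : k = a := by
        by_contra hka
        exact hsep a List.mem_cons_self k hk (Ne.symm hka) i (Or.inl hia) hi
      -- row `i` of `W k` only uses columns in `∂J_k`, where the later factors act trivially
      refine mul_apply_of_row_eq_one_of_ne_zero (fun t ht => ?_) j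
      have htb := (hG k List.mem_cons_self).mem_bdry_of_apply_ne_zero hi ht
      refine list_prod_apply_of_forall_notMem hG' fun l hl htl => ?_
      by_cases hkl : k = l
      · exact (mem_bdry.mp htb).1 (hkl ▸ htl)
      · exact hsep k List.mem_cons_self l (List.mem_cons_of_mem k hl) hkl t (Or.inr htb) htl
    · have hkL : k ∈ L := (List.mem_cons.mp hk).resolve_left fun hka => hia (hka ▸ hi)
      rw [mul_apply_of_row_eq_one ((hG a List.mem_cons_self).apply_of_notMem hia)]
      exact ih hG'
        (fun k hk l hl => hsep k (List.mem_cons_of_mem a hk) l (List.mem_cons_of_mem a hl)) hkL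

end ListProd

section Separation

variable {n m : ℕ} {J : ℕ → Finset (Fin n)}

lemma notMem_of_two_le_dist (hB1 : CondB1 m J) (hB2 : CondB2 m J) {j k : ℕ}
    (hj : j ∈ Icc 1 m) (hk : k ∈ Icc 1 m) (hjk : j + 2 ≤ k ∨ k + 2 ≤ j) {t : Fin n}
    (ht : t ∈ J j ∨ t ∈ bdry (J j)) : t ∉ J k := by
  rw [Finset.mem_Icc] at hj hk
  have hnear : blockMin (J j) ≤ (t : ℕ) + 1 ∧ (t : ℕ) ≤ blockMax (J j) + 1 := by
    rcases ht with ht | ht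
    · exact ⟨(blockMin_le ht).trans (Nat.le_succ _), (le_blockMax ht).trans (Nat.le_succ _)⟩
    · have hJ := hB1.1 j (Finset.mem_Icc.mpr hj)
      have := hJ.val_of_mem_bdry ht
      have := blockMin_le_blockMax hJ.1
      constructor <;> omega
  intro htk
  have := blockMin_le htk
  have := le_blockMax htk
  rcases hjk with hjk | hjk
  · have := hB2 j k hj.1 hjk hk.2; omega
  · have := hB2 k j hk.1 hjk hj.2; omega

lemma adjacent_of_mem_bdry_of_mem (hB1 : CondB1 m J) (hB2 : CondB2 m J) {k l : ℕ}
    (hk : k ∈ Icc 1 m) (hl : l ∈ Icc 1 m) {t : Fin n} (ht : t ∈ bdry (J k)) (htl : t ∈ J l) :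
    l = k + 1 ∨ l + 1 = k := by
  have hne : l ≠ k := by
    rintro rfl
    exact (mem_bdry.mp ht).1 htl
  by_contra hfar
  exact notMem_of_two_le_dist hB1 hB2 hk hl (by omega) (Or.inr ht) htl

lemma exists_mem_parity_ne_of_mem_bdry (hcover : ∀ i : Fin n, ∃ k ∈ Icc 1 m, i ∈ J k)
    (hB1 : CondB1 m J) (hB2 : CondB2 m J) {k : ℕ} (hk : k ∈ Icc 1 m) {t : Fin n}
    (ht : t ∈ bdry (J k)) : ∃ l ∈ Icc 1 m, l % 2 ≠ k % 2 ∧ t ∈ J l := by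
  obtain ⟨l, hl, htl⟩ := hcover t
  have := adjacent_of_mem_bdry_of_mem hB1 hB2 hk hl ht htl
  exact ⟨l, hl, by omega, htl⟩

lemma exists_mem_odd_of_forall_notMem_even (hcover : ∀ i : Fin n, ∃ k ∈ Icc 1 m, i ∈ J k)
    {i : Fin n} (hi : ∀ k ∈ Icc 1 m, k % 2 = 0 → i ∉ J k) : ∃ l ∈ Icc 1 m, l % 2 = 1 ∧ i ∈ J l := by
  obtain ⟨l, hl, hil⟩ := hcover i
  exact ⟨l, hl, (Nat.mod_two_eq_zero_or_one l).resolve_left fun h => hi l hl h hil, hil⟩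

end Separation

section Sweep

variable {n m : ℕ} {J : ℕ → Finset (Fin n)} {W : ℕ → Matrix (Fin n) (Fin n) ℝ}

/-- `𝒲_even` for `r = 0` and `𝒲_odd` for `r = 1`. -/
def parityProd (W : ℕ → Matrix (Fin n) (Fin n) ℝ) (m r : ℕ) : Matrix (Fin n) (Fin n) ℝ :=
  (((descList m).filter fun k => k % 2 = r).map W).prod

def sweep (W : ℕ → Matrix (Fin n) (Fin n) ℝ) (m : ℕ) : Matrix (Fin n) (Fin n) ℝ :=
  parityProd W m 0 * parityProd W m 1

def CondA1 (m : ℕ) (J : ℕ → Finset (Fin n)) (W : ℕ → Matrix (Fin n) (Fin n) ℝ) (lam : ℝ) :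
    Prop :=
  ∀ k ∈ Icc 1 m, ∀ i ∈ J k,
    i ∈ (Icc 1 m).biUnion (fun l => bdry (J l)) → ∑ j ∈ bdry (J k), W k i j ≤ lam

def sweepSupport (m : ℕ) (J : ℕ → Finset (Fin n)) : Set (Fin n) :=
  {j | j ∈ (Icc 1 m).biUnion (fun l => bdry (J l)) ∧ ∃ k ∈ Icc 1 m, k % 2 = 0 ∧ j ∈ J k}

lemma mem_filter_descList {r k : ℕ} :
    k ∈ (descList m).filter (fun k => k % 2 = r) ↔ k ∈ Icc 1 m ∧ k % 2 = r := by
  simp only [List.mem_filter, descList, List.mem_map, List.mem_range, decide_eq_true_eq,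
    Finset.mem_Icc]
  constructor
  · rintro ⟨⟨i, hi, rfl⟩, hr⟩
    exact ⟨⟨by omega, by omega⟩, hr⟩
  · rintro ⟨⟨h1, h2⟩, hr⟩
    exact ⟨⟨m - k, by omega, by omega⟩, hr⟩

lemma parityProd_nonneg (hblock : ∀ k ∈ Icc 1 m, GibbsBlock (J k) (W k)) (r : ℕ) (i j : Fin n) :
    0 ≤ parityProd W m r i j := by
  refine list_prod_apply_nonneg (fun A hA => ?_) i j
  obtain ⟨k, hk, rfl⟩ := List.mem_map.mp hA
  exact (hblock k (mem_filter_descList.mp hk).1).nonneg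

lemma parityProd_apply_of_forall_notMem (hblock : ∀ k ∈ Icc 1 m, GibbsBlock (J k) (W k))
    {r : ℕ} {i : Fin n} (hi : ∀ k ∈ Icc 1 m, k % 2 = r → i ∉ J k) (j : Fin n) :
    parityProd W m r i j = (1 : Matrix (Fin n) (Fin n) ℝ) i j :=
  list_prod_apply_of_forall_notMem (fun k hk => hblock k (mem_filter_descList.mp hk).1)
    (fun k hk => hi k (mem_filter_descList.mp hk).1 (mem_filter_descList.mp hk).2) j

lemma parityProd_apply_of_mem (hB1 : CondB1 m J) (hB2 : CondB2 m J)
    (hblock : ∀ k ∈ Icc 1 m, GibbsBlock (J k) (W k)) {r k : ℕ} (hk : k ∈ Icc 1 m)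
    (hkr : k % 2 = r) {i : Fin n} (hi : i ∈ J k) (j : Fin n) :
    parityProd W m r i j = W k i j := by
  refine list_prod_apply_of_mem (fun k hk => hblock k (mem_filter_descList.mp hk).1)
    (fun k hk l hl hkl t ht => ?_) (mem_filter_descList.mpr ⟨hk, hkr⟩) hi j
  obtain ⟨hk, hkr⟩ := mem_filter_descList.mp hk
  obtain ⟨hl, hlr⟩ := mem_filter_descList.mp hl
  exact notMem_of_two_le_dist hB1 hB2 hk hl (by omega) ht

lemma sum_parityProd_apply_eq (hB1 : CondB1 m J) (hB2 : CondB2 m J)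
    (hblock : ∀ k ∈ Icc 1 m, GibbsBlock (J k) (W k)) {r k : ℕ} (hk : k ∈ Icc 1 m)
    (hkr : k % 2 = r) {i : Fin n} (hi : i ∈ J k) :
    ∑ j, parityProd W m r i j = ∑ j ∈ bdry (J k), W k i j := by
  simp only [parityProd_apply_of_mem hB1 hB2 hblock hk hkr hi]
  exact (hblock k hk).sum_apply_eq_sum_bdry hi

lemma mem_sweepSupport_of_parityProd_odd_ne_zero
    (hcover : ∀ i : Fin n, ∃ k ∈ Icc 1 m, i ∈ J k) (hB1 : CondB1 m J) (hB2 : CondB2 m J)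
    (hblock : ∀ k ∈ Icc 1 m, GibbsBlock (J k) (W k)) {l : ℕ} (hl : l ∈ Icc 1 m)
    (hlodd : l % 2 = 1) {t j : Fin n} (ht : t ∈ J l) (htj : parityProd W m 1 t j ≠ 0) :
    j ∈ sweepSupport m J := by
  rw [parityProd_apply_of_mem hB1 hB2 hblock hl hlodd ht] at htj
  have hj := (hblock l hl).mem_bdry_of_apply_ne_zero ht htj
  obtain ⟨k, hk, hkl, hjk⟩ := exists_mem_parity_ne_of_mem_bdry hcover hB1 hB2 hl hj
  exact ⟨Finset.mem_biUnion.mpr ⟨l, hl, hj⟩, k, hk, by omega, hjk⟩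

lemma sweep_nonneg (hblock : ∀ k ∈ Icc 1 m, GibbsBlock (J k) (W k)) (i j : Fin n) :
    0 ≤ sweep W m i j :=
  mul_apply_nonneg (parityProd_nonneg hblock 0) (parityProd_nonneg hblock 1) i j

lemma sweep_apply_of_forall_notMem_even (hblock : ∀ k ∈ Icc 1 m, GibbsBlock (J k) (W k))
    {i : Fin n} (hi : ∀ k ∈ Icc 1 m, k % 2 = 0 → i ∉ J k) (j : Fin n) :
    sweep W m i j = parityProd W m 1 i j :=
  mul_apply_of_row_eq_one (parityProd_apply_of_forall_notMem hblock hi) j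

lemma sum_sweep_apply_le_of_mem_even (hcover : ∀ i : Fin n, ∃ k ∈ Icc 1 m, i ∈ J k)
    (hB1 : CondB1 m J) (hB2 : CondB2 m J) (hblock : ∀ k ∈ Icc 1 m, GibbsBlock (J k) (W k))
    {lam : ℝ} (hA1 : CondA1 m J W lam)
    {k : ℕ} (hk : k ∈ Icc 1 m) (hkeven : k % 2 = 0) {i : Fin n} (hi : i ∈ J k) :
    ∑ j, sweep W m i j ≤ (∑ t ∈ bdry (J k), W k i t) * lam := by
  rw [sweep, sum_mul_apply_eq, ← (hblock k hk).sum_apply_eq_sum_bdry hi]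
  simp only [parityProd_apply_of_mem hB1 hB2 hblock hk hkeven hi]
  refine sum_mul_le_sum_mul_of_ne_zero ((hblock k hk).nonneg i) fun t ht => ?_
  have htk := (hblock k hk).mem_bdry_of_apply_ne_zero hi ht
  obtain ⟨l, hl, hlk, htl⟩ := exists_mem_parity_ne_of_mem_bdry hcover hB1 hB2 hk htk
  rw [sum_parityProd_apply_eq hB1 hB2 hblock hl (by omega) htl]
  exact hA1 l hl t htl (Finset.mem_biUnion.mpr ⟨k, hk, htk⟩)

lemma mem_sweepSupport_of_sweep_ne_zero (hcover : ∀ i : Fin n, ∃ k ∈ Icc 1 m, i ∈ J k)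
    (hB1 : CondB1 m J) (hB2 : CondB2 m J) (hblock : ∀ k ∈ Icc 1 m, GibbsBlock (J k) (W k))
    {i j : Fin n} (hij : sweep W m i j ≠ 0) : j ∈ sweepSupport m J := by
  by_cases heven : ∃ k ∈ Icc 1 m, k % 2 = 0 ∧ i ∈ J k
  · obtain ⟨k, hk, hkeven, hi⟩ := heven
    rw [sweep, Matrix.mul_apply] at hij
    obtain ⟨t, -, hitj⟩ := Finset.exists_ne_zero_of_sum_ne_zero hij
    have hit : parityProd W m 0 i t ≠ 0 := left_ne_zero_of_mul hitj
    rw [parityProd_apply_of_mem hB1 hB2 hblock hk hkeven hi] at hit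
    have htk := (hblock k hk).mem_bdry_of_apply_ne_zero hi hit
    obtain ⟨l, hl, hlk, htl⟩ := exists_mem_parity_ne_of_mem_bdry hcover hB1 hB2 hk htk
    exact mem_sweepSupport_of_parityProd_odd_ne_zero hcover hB1 hB2 hblock hl (by omega) htl
      (right_ne_zero_of_mul hitj)
  · push Not at heven
    obtain ⟨l, hl, hlodd, hil⟩ := exists_mem_odd_of_forall_notMem_even hcover heven
    rw [sweep_apply_of_forall_notMem_even hblock heven] at hij
    exact mem_sweepSupport_of_parityProd_odd_ne_zero hcover hB1 hB2 hblock hl hlodd hil hij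

lemma sum_sweep_apply_le_two (hcover : ∀ i : Fin n, ∃ k ∈ Icc 1 m, i ∈ J k)
    (hB1 : CondB1 m J) (hB2 : CondB2 m J) (hblock : ∀ k ∈ Icc 1 m, GibbsBlock (J k) (W k))
    {lam : ℝ} (hlam0 : 0 ≤ lam) (hlam1 : lam < 1)
    (hA1 : CondA1 m J W lam)
    (i : Fin n) : ∑ j, sweep W m i j ≤ 2 := by
  by_cases heven : ∃ k ∈ Icc 1 m, k % 2 = 0 ∧ i ∈ J k
  · obtain ⟨k, hk, hkeven, hi⟩ := heven
    calc ∑ j, sweep W m i j ≤ (∑ t ∈ bdry (J k), W k i t) * lam :=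
          sum_sweep_apply_le_of_mem_even hcover hB1 hB2 hblock hA1 hk hkeven hi
      _ ≤ 2 * 1 := mul_le_mul ((hblock k hk).sum_bdry_le_two (hB1.1 k hk) i) hlam1.le hlam0
          zero_le_two
      _ = 2 := mul_one 2
  · push Not at heven
    obtain ⟨l, hl, hlodd, hil⟩ := exists_mem_odd_of_forall_notMem_even hcover heven
    simp only [sweep_apply_of_forall_notMem_even hblock heven]
    rw [sum_parityProd_apply_eq hB1 hB2 hblock hl hlodd hil]
    exact (hblock l hl).sum_bdry_le_two (hB1.1 l hl) i

lemma sum_sweep_apply_le_sq (hcover : ∀ i : Fin n, ∃ k ∈ Icc 1 m, i ∈ J k)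
    (hB1 : CondB1 m J) (hB2 : CondB2 m J) (hblock : ∀ k ∈ Icc 1 m, GibbsBlock (J k) (W k))
    {lam : ℝ} (hlam0 : 0 ≤ lam)
    (hA1 : CondA1 m J W lam)
    {i : Fin n} (hi : i ∈ sweepSupport m J) : ∑ j, sweep W m i j ≤ lam ^ 2 := by
  obtain ⟨hibdry, k, hk, hkeven, hik⟩ := hi
  calc ∑ j, sweep W m i j ≤ (∑ t ∈ bdry (J k), W k i t) * lam :=
        sum_sweep_apply_le_of_mem_even hcover hB1 hB2 hblock hA1 hk hkeven hik
    _ ≤ lam * lam := mul_le_mul_of_nonneg_right (hA1 k hk i hik hibdry) hlam0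
    _ = lam ^ 2 := (sq lam).symm

end Sweep

theorem stmt2_general {n m : ℕ}
    (J : ℕ → Finset (Fin n)) (W : ℕ → Matrix (Fin n) (Fin n) ℝ)
    (hcover : ∀ i : Fin n, ∃ k ∈ Finset.Icc 1 m, i ∈ J k)
    (hB1 : CondB1 m J) (hB2 : CondB2 m J)
    (hblock : ∀ k ∈ Finset.Icc 1 m, GibbsBlock (J k) (W k))
    (lam : ℝ) (hlam0 : 0 ≤ lam) (hlam1 : lam < 1)
    (hA1 : ∀ k ∈ Finset.Icc 1 m, ∀ i ∈ J k,
      i ∈ (Finset.Icc 1 m).biUnion (fun l => bdry (J l)) →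
      ∑ j ∈ bdry (J k), W k i j ≤ lam) :
    rowNorm (((((descList m).filter fun k => k % 2 = 0).map W).prod) *
        ((((descList m).filter fun k => k % 2 = 1).map W).prod)) ≤ 2 ∧
    ∀ k : ℕ, 1 ≤ k →
      rowNorm ((((((descList m).filter fun k => k % 2 = 0).map W).prod) *
          ((((descList m).filter fun k => k % 2 = 1).map W).prod)) ^ k) ≤
        rowNorm (((((descList m).filter fun k => k % 2 = 0).map W).prod) *
          ((((descList m).filter fun k => k % 2 = 1).map W).prod)) * lam ^ (2 * (k - 1)) := by
  have hnonneg : ∀ i j, 0 ≤ sweep W m i j := sweep_nonneg hblock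
  refine ⟨rowNorm_le_of_nonneg hnonneg zero_le_two
    (sum_sweep_apply_le_two hcover hB1 hB2 hblock hlam0 hlam1 hA1), fun k hk => ?_⟩
  obtain ⟨p, rfl⟩ := Nat.exists_eq_add_of_le' hk
  rw [Nat.add_sub_cancel, pow_mul]
  exact rowNorm_pow_succ_le hnonneg
    (fun _ _ => mem_sweepSupport_of_sweep_ne_zero hcover hB1 hB2 hblock) (sq_nonneg lam)
    (fun _ => sum_sweep_apply_le_sq hcover hB1 hB2 hblock hlam0 hA1) p

theorem stmt2 {n m : ℕ} (hn : 1 ≤ n) (hm : 1 ≤ m)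
    (J : ℕ → Finset (Fin n)) (W : ℕ → Matrix (Fin n) (Fin n) ℝ)
    (hcover : ∀ i : Fin n, ∃ k ∈ Finset.Icc 1 m, i ∈ J k)
    (hB1 : CondB1 m J) (hB2 : CondB2 m J)
    (hblock : ∀ k ∈ Finset.Icc 1 m, GibbsBlock (J k) (W k))
    (lam : ℝ) (hlam0 : 0 ≤ lam) (hlam1 : lam < 1)
    (hA1 : ∀ k ∈ Finset.Icc 1 m, ∀ i ∈ J k,
      i ∈ (Finset.Icc 1 m).biUnion (fun l => bdry (J l)) →
      ∑ j ∈ bdry (J k), W k i j ≤ lam) :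
    rowNorm (((((descList m).filter fun k => k % 2 = 0).map W).prod) *
        ((((descList m).filter fun k => k % 2 = 1).map W).prod)) ≤ 2 ∧
    ∀ k : ℕ, 1 ≤ k →
      rowNorm ((((((descList m).filter fun k => k % 2 = 0).map W).prod) *
          ((((descList m).filter fun k => k % 2 = 1).map W).prod)) ^ k) ≤
        rowNorm (((((descList m).filter fun k => k % 2 = 0).map W).prod) *
          ((((descList m).filter fun k => k % 2 = 1).map W).prod)) * lam ^ (2 * (k - 1)) :=
  stmt2_general J W hcover hB1 hB2 hblock lam hlam0 hlam1 hA1
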